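/- Let n ≥ 1, let ρ be a positive semidefinite 2ⁿ×2ⁿ complex matrix with tr(ρ) = 1, and let O be a Hermitian 2ⁿ×2ⁿ complex matrix with tr(O) = 0. Define 𝒞⁽ᵛ⁾ = Σ_{x,y,z ∈ {0,1}ⁿ} ( |x x z⟩ + |x z x⟩ + |z x x⟩ )( ⟨y y z| + ⟨y z y| + ⟨z y y| ), a matrix indexed by triples of bit strings. Then | tr( 𝒞⁽ᵛ⁾ (ρ ⊗ O ⊗ O) ) | ≤ 7 tr(O²). -/

import Mathlib

open Finset Matrix
open scoped ComplexOrder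

/-- Bit strings of length `n`. -/
abbrev Bits (n : ℕ) := Fin n → Fin 2

/-- Triples of bit strings. -/
abbrev Bits3 (n : ℕ) := Bits n × Bits n × Bits n

/-- The standard basis vector `|a b c⟩` of `ℂ^{({0,1}ⁿ)³}`. -/
def ket3 {n : ℕ} (a b c : Bits n) : Bits3 n → ℂ :=
  fun p => if p = (a, b, c) then 1 else 0

/-- The Kronecker product `P ⊗ Q ⊗ R`, a matrix indexed by triples of bit strings. -/
def kron3 {ι : Type*} (P Q R : Matrix ι ι ℂ) : Matrix (ι × ι × ι) (ι × ι × ι) ℂ :=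
  Matrix.of fun p q => P p.1 q.1 * Q p.2.1 q.2.1 * R p.2.2 q.2.2

/-- The matrix `𝒞⁽ᵛ⁾ = Σ_{x,y,z} (|xxz⟩+|xzx⟩+|zxx⟩)(⟨yyz|+⟨yzy|+⟨zyy|)`. -/
noncomputable def Cv (n : ℕ) : Matrix (Bits3 n) (Bits3 n) ℂ :=
  ∑ x : Bits n, ∑ y : Bits n, ∑ z : Bits n,
    Matrix.vecMulVec (ket3 x x z + ket3 x z x + ket3 z x x)
      (ket3 y y z + ket3 y z y + ket3 z y y)

/-!
Expanding `𝒞⁽ᵛ⁾` gives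
`tr (𝒞⁽ᵛ⁾ (ρ ⊗ O ⊗ O)) = 2 tr O tr (ρ Oᵀ) + 2 tr (ρ Oᵀ Oᵀ) + 2 tr (ρ O Oᵀ) + 2 tr (ρ Oᵀ O)`
`+ tr ρ tr (O Oᵀ)`. The first term vanishes since `tr O = 0`. Factoring `ρ = Dᴴ D` and applying
Cauchy–Schwarz for the Frobenius inner product bounds each `|tr (ρ X Y)|` by `tr ρ ‖X‖ ‖Y‖`, and
`|tr (O Oᵀ)| ≤ ‖O‖²`, where `‖O‖² = tr (O²)` because `O` is Hermitian. Hence the total is at most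
`(2 + 2 + 2 + 1) tr (O²)`.
-/

namespace Matrix

variable {𝕜 m n : Type*} [RCLike 𝕜] [Fintype m] [Fintype n]

open scoped Matrix.Norms.Frobenius

theorem frobenius_norm_sq_eq_re_trace_conjTranspose_mul_self (A : Matrix m n 𝕜) :
    ‖A‖ ^ 2 = RCLike.re (Aᴴ * A).trace := by
  change ‖WithLp.toLp 2 fun i => WithLp.toLp 2 fun j => A i j‖ ^ 2 = _
  simp only [PiLp.norm_sq_eq_of_L2, trace, diag_apply, mul_apply, conjTranspose_apply,
    RCLike.star_def, RCLike.conj_mul, map_sum, ← RCLike.ofReal_pow, RCLike.ofReal_re]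
  exact Finset.sum_comm

theorem norm_trace_mul_le_frobenius (A : Matrix m n 𝕜) (B : Matrix n m 𝕜) :
    ‖(A * B).trace‖ ≤ ‖A‖ * ‖B‖ := by
  have h : (A * B).trace =
      inner 𝕜 (WithLp.toLp 2 fun i => WithLp.toLp 2 fun j => star (A i j))
        (WithLp.toLp 2 fun i => WithLp.toLp 2 fun j => B j i) := by
    simp [trace, mul_apply, PiLp.inner_apply, mul_comm]
  rw [h, ← frobenius_norm_transpose B, ← frobenius_norm_map_eq A star norm_star]
  exact norm_inner_le_norm _ _

theorem PosSemidef.norm_trace_mul_mul_le {ρ : Matrix n n 𝕜} (hρ : ρ.PosSemidef)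
    (X Y : Matrix n n 𝕜) : ‖(ρ * X * Y).trace‖ ≤ RCLike.re ρ.trace * ‖X‖ * ‖Y‖ := by
  classical
  obtain ⟨D, rfl⟩ : ∃ D : Matrix n n 𝕜, ρ = Dᴴ * D := by
    open scoped MatrixOrder Matrix.Norms.L2Operator in
    exact CStarAlgebra.nonneg_iff_eq_star_mul_self.mp hρ.nonneg
  calc ‖(Dᴴ * D * X * Y).trace‖ = ‖((D * X) * (Y * Dᴴ)).trace‖ := by
        rw [mul_assoc, mul_assoc, trace_mul_comm]; simp only [mul_assoc]
    _ ≤ ‖D * X‖ * ‖Y * Dᴴ‖ := norm_trace_mul_le_frobenius _ _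
    _ ≤ (‖D‖ * ‖X‖) * (‖Y‖ * ‖Dᴴ‖) := by gcongr <;> exact frobenius_norm_mul _ _
    _ = RCLike.re (Dᴴ * D).trace * ‖X‖ * ‖Y‖ := by
        rw [frobenius_norm_conjTranspose, ← frobenius_norm_sq_eq_re_trace_conjTranspose_mul_self]
        ring

theorem IsHermitian.re_trace_mul_self_eq_frobenius_norm_sq {A : Matrix n n 𝕜}
    (hA : A.IsHermitian) :
    RCLike.re (A * A).trace = ‖A‖ ^ 2 := by
  rw [frobenius_norm_sq_eq_re_trace_conjTranspose_mul_self, hA.eq]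

end Matrix

lemma ket3_eq_single {n : ℕ} (a b c : Bits n) : ket3 a b c = Pi.single (a, b, c) 1 := by
  ext p
  simp [ket3, Pi.single_apply]

lemma trace_vecMulVec_ket3_mul {n : ℕ} (a b c d e f : Bits n)
    (K : Matrix (Bits3 n) (Bits3 n) ℂ) :
    (vecMulVec (ket3 a b c) (ket3 d e f) * K).trace = K (d, e, f) (a, b, c) := by
  rw [ket3_eq_single, ket3_eq_single, ← single_eq_single_vecMulVec_single, trace_single_mul,
    one_smul]

lemma kron3_apply {ι : Type*} (P Q R : Matrix ι ι ℂ) (p q : ι × ι × ι) :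
    kron3 P Q R p q = P p.1 q.1 * Q p.2.1 q.2.1 * R p.2.2 q.2.2 :=
  rfl

lemma trace_Cv_mul {n : ℕ} (K : Matrix (Bits3 n) (Bits3 n) ℂ) :
    (Cv n * K).trace = ∑ x, ∑ y, ∑ z,
      ((K (y, y, z) (x, x, z) + K (y, y, z) (x, z, x) + K (y, y, z) (z, x, x))
        + (K (y, z, y) (x, x, z) + K (y, z, y) (x, z, x) + K (y, z, y) (z, x, x))
        + (K (z, y, y) (x, x, z) + K (z, y, y) (x, z, x) + K (z, y, y) (z, x, x))) := by
  simp only [Cv, Finset.sum_mul, trace_sum, add_vecMulVec, vecMulVec_add, add_mul, trace_add,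
    trace_vecMulVec_ket3_mul]

lemma trace_Cv_mul_kron3 {n : ℕ} (P O : Matrix (Bits n) (Bits n) ℂ) :
    (Cv n * kron3 P O O).trace =
      2 * O.trace * (P * Oᵀ).trace + 2 * (P * Oᵀ * Oᵀ).trace + 2 * (P * O * Oᵀ).trace
        + 2 * (P * Oᵀ * O).trace + P.trace * (O * Oᵀ).trace := by
  have ha : ∑ x, ∑ y, ∑ z, P y x * O y x * O z z = O.trace * (P * Oᵀ).trace := by
    simp only [trace, diag_apply, mul_apply, transpose_apply, sum_mul, mul_sum]
    rw [sum_comm]; ac_rfl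
  have hb : ∑ x, ∑ y, ∑ z, P y x * O y z * O z x = (P * Oᵀ * Oᵀ).trace := by
    simp only [trace, diag_apply, mul_apply, transpose_apply, sum_mul]
    conv_rhs => rw [sum_comm_cycle]
    ac_rfl
  have hc : ∑ x, ∑ y, ∑ z, P y z * O y x * O z x = (P * O * Oᵀ).trace := by
    simp only [trace, diag_apply, mul_apply, transpose_apply, sum_mul]
    rw [sum_comm]; ac_rfl
  have hd : ∑ x, ∑ y, ∑ z, P z x * O y x * O y z = (P * Oᵀ * O).trace := by
    simp only [trace, diag_apply, mul_apply, transpose_apply, sum_mul]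
    rw [sum_comm, sum_comm_cycle]
  have he : ∑ x, ∑ y, ∑ z, P z z * O y x * O y x = P.trace * (O * Oᵀ).trace := by
    simp only [trace, diag_apply, mul_apply, transpose_apply, sum_mul, mul_sum]
    rw [sum_comm]; ac_rfl
  rw [trace_Cv_mul, mul_assoc 2 O.trace, ← ha, ← hb, ← hc, ← hd, ← he]
  simp only [kron3_apply, mul_sum, ← sum_add_distrib]
  refine sum_congr rfl fun x _ => sum_congr rfl fun y _ => sum_congr rfl fun z _ => ?_
  ring

open scoped Matrix.Norms.Frobenius in
theorem Cv_bound_general (n : ℕ)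
    (ρ O : Matrix (Bits n) (Bits n) ℂ)
    (hρ : ρ.PosSemidef) (hρtr : ρ.trace = 1)
    (hO : O.IsHermitian) (hOtr : O.trace = 0) :
    ‖(Cv n * kron3 ρ O O).trace‖ ≤ 7 * ((O * O).trace).re := by
  have hρ_trace_le (X Y : Matrix (Bits n) (Bits n) ℂ) :
      ‖(ρ * X * Y).trace‖ ≤ ‖X‖ * ‖Y‖ := by
    simpa [hρtr] using hρ.norm_trace_mul_mul_le X Y
  have h₁ := hρ_trace_le Oᵀ Oᵀ
  have h₂ := hρ_trace_le O Oᵀ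
  have h₃ := hρ_trace_le Oᵀ O
  have h₄ := norm_trace_mul_le_frobenius O Oᵀ
  rw [frobenius_norm_transpose] at h₁ h₂ h₃ h₄
  have hOO : (O * O).trace.re = ‖O‖ ^ 2 := hO.re_trace_mul_self_eq_frobenius_norm_sq
  rw [trace_Cv_mul_kron3, hOtr, hρtr, hOO]
  simp only [mul_zero, zero_mul, zero_add, one_mul]
  calc _ ≤ ‖2 * (ρ * Oᵀ * Oᵀ).trace‖ + ‖2 * (ρ * O * Oᵀ).trace‖
          + ‖2 * (ρ * Oᵀ * O).trace‖ + ‖(O * Oᵀ).trace‖ := norm_add₄_le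
    _ ≤ 7 * ‖O‖ ^ 2 := by
        simp only [norm_mul, Complex.norm_two]
        linarith

/-- `|tr(𝒞⁽ᵛ⁾ (ρ ⊗ O ⊗ O))| ≤ 7 tr(O²)`. -/
theorem Cv_bound (n : ℕ) (hn : 1 ≤ n)
    (ρ O : Matrix (Bits n) (Bits n) ℂ)
    (hρ : ρ.PosSemidef) (hρtr : ρ.trace = 1)
    (hO : O.IsHermitian) (hOtr : O.trace = 0) :
    ‖(Cv n * kron3 ρ O O).trace‖ ≤ 7 * ((O * O).trace).re :=
  Cv_bound_general n ρ O hρ hρtr hO hOtr
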